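/- Let m ≥ 2, K = F_{2^m}, let φ be a field automorphism of K, and let u_{1,1}, u_{2,1}, u_{2,2} ∈ K with u_{1,1} ≠ 0, u_{2,1} ≠ 0, u_{2,1} = φ(u_{2,2}), and Tr_{2^m/2}(φ^{−1}(u_{1,1})·u_{2,2}) = 0. Define F : K × K → K × K by F(y,z) = (y·φ(z), z) + Tr_{2^m/2}(u_{2,1}y + u_{2,2}z)·(u_{1,1}·y, 0). Then there exist a ∈ K, a ≠ 0, b ∈ K, and w_1, w_2 ∈ K such that the second derivative D_{(w_1,0)}D_{(w_2,0)}F_{(a,b)} is not identically zero on K × K; in fact Tr_{2^m/2}(a·u_{1,1}·w_2)·Tr_{2^m/2}(u_{2,1}·w_1) + Tr_{2^m/2}(a·u_{1,1}·w_1)·Tr_{2^m/2}(u_{2,1}·w_2) = 1 for suitable a, w_1, w_2. -/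
import Mathlib


open scoped Classical BigOperators

noncomputable section

/-- The finite field `K = F_{2^m}`. -/
abbrev K (m : ℕ) := GaloisField 2 m

noncomputable instance (m : ℕ) : Fintype (K m) := Fintype.ofFinite _

/-- The absolute trace `Tr_{2^m/2}` of `K`, viewed as an element of `K`
(its values lie in the prime field `{0,1}`). -/
def trm (m : ℕ) (x : K m) : K m := ∑ j ∈ Finset.range m, x ^ 2 ^ j

/-- `(-1)^b` for `b ∈ {0,1} ⊆ K`. -/
def chiK (m : ℕ) (x : K m) : ℤ := if x = 0 then 1 else -1

/-- The inner product `⟨(y₁,z₁),(y₂,z₂)⟩ = Tr(y₁y₂) + Tr(z₁z₂)` on `V = K × K`. -/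
def ip (m : ℕ) (w v : K m × K m) : K m := trm m (w.1 * v.1) + trm m (w.2 * v.2)

/-- The Walsh transform of a Boolean-valued function on `V = K × K`. -/
def walshV (m : ℕ) (f : K m × K m → K m) (w : K m × K m) : ℤ :=
  ∑ v : K m × K m, chiK m (f v + ip m w v)

lemma trm_zero (m : ℕ) : trm m 0 = 0 := by
  simp [trm, zero_pow (by positivity : (2:ℕ)^_ ≠ 0)]

lemma trm_add (m : ℕ) (x y : K m) : trm m (x + y) = trm m x + trm m y := by
  simp [trm, add_pow_char_pow, Finset.sum_add_distrib]

lemma card_K (m : ℕ) (hm : m ≠ 0) : Fintype.card (K m) = 2 ^ m := by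
  rw [← Nat.card_eq_fintype_card]; exact GaloisField.card 2 m hm

lemma pow_card_K (m : ℕ) (hm : m ≠ 0) (x : K m) : x ^ 2 ^ m = x := by
  have := FiniteField.pow_card x
  rwa [card_K m hm] at this

lemma trm_sq (m : ℕ) (hm : m ≠ 0) (x : K m) : trm m x * trm m x = trm m x := by
  have h : trm m x * trm m x = ∑ j ∈ Finset.range m, x ^ 2 ^ (j + 1) := by
    rw [← sq, trm, sum_pow_char]
    refine Finset.sum_congr rfl fun j _ => ?_
    rw [← pow_mul, pow_succ]
  have h2 : ∑ j ∈ Finset.range (m+1), x ^ 2 ^ j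
      = (∑ j ∈ Finset.range m, x ^ 2 ^ (j+1)) + x ^ 2 ^ 0 := Finset.sum_range_succ' _ m
  have h3 : ∑ j ∈ Finset.range (m+1), x ^ 2 ^ j = trm m x + x ^ 2 ^ m :=
    Finset.sum_range_succ _ m
  have hc : (2 : K m) = 0 := by
    have : CharP (K m) 2 := inferInstance
    exact CharTwo.two_eq_zero
  have := h2.symm.trans h3
  rw [pow_card_K m hm, pow_zero, pow_one] at this
  -- this : (∑ j ∈ range m, x ^ 2^(j+1)) + x = trm m x + x
  have : (∑ j ∈ Finset.range m, x ^ 2 ^ (j+1)) = trm m x := by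
    have := congrArg (· + x) this
    simpa [add_assoc, CharTwo.add_self_eq_zero] using this
  rw [h, this]

lemma trm_mem (m : ℕ) (hm : m ≠ 0) (x : K m) : trm m x = 0 ∨ trm m x = 1 := by
  have h := trm_sq m hm x
  have : trm m x * (trm m x - 1) = 0 := by linear_combination h
  rcases mul_eq_zero.mp this with h' | h'
  · exact Or.inl h'
  · exact Or.inr (by linear_combination h')

lemma exists_trm_one (m : ℕ) (hm : m ≠ 0) : ∃ x : K m, trm m x = 1 := by
  classical
  set P : Polynomial (K m) := ∑ j ∈ Finset.range m, Polynomial.X ^ 2 ^ j with hP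
  have hcoeff : P.coeff 1 = 1 := by
    rw [hP, Polynomial.finset_sum_coeff]
    rw [Finset.sum_eq_single 0]
    · simp
    · intro j _ hj
      rw [Polynomial.coeff_X_pow]
      have h2 : 2 ^ j ≠ 1 := Nat.one_lt_two_pow (by omega) |>.ne'
      simp [Ne.symm h2]
    · intro h; exact absurd (Finset.mem_range.mpr (Nat.pos_of_ne_zero hm)) h
  have hP0 : P ≠ 0 := fun h => by simp [h] at hcoeff
  have hdeg : P.natDegree < 2 ^ m := by
    have : P.natDegree ≤ 2 ^ (m - 1) := by
      apply Polynomial.natDegree_sum_le_of_forall_le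
      intro j hj
      rw [Polynomial.natDegree_X_pow]
      exact Nat.pow_le_pow_right (by norm_num) (Nat.le_sub_one_of_lt (Finset.mem_range.mp hj))
    calc P.natDegree ≤ 2 ^ (m-1) := this
      _ < 2 ^ m := Nat.pow_lt_pow_right (by norm_num) (by omega)
  obtain ⟨r, hr⟩ := P.exists_eval_ne_zero_of_natDegree_lt_card hP0 (by
    rw [Cardinal.mk_fintype, card_K m hm]
    exact_mod_cast hdeg)
  have heval : P.eval r = trm m r := by
    rw [hP, Polynomial.eval_finset_sum, trm]
    simp
  rw [heval] at hr
  exact ⟨r, (trm_mem m hm r).resolve_left hr⟩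

lemma exists_trm_mul_one (m : ℕ) (hm : m ≠ 0) (c : K m) (hc : c ≠ 0) :
    ∃ x : K m, trm m (c * x) = 1 := by
  obtain ⟨y, hy⟩ := exists_trm_one m hm
  exact ⟨c⁻¹ * y, by rw [← mul_assoc, mul_inv_cancel₀ hc, one_mul]; exact hy⟩


/-- for `m ≥ 2` and `u_{1,1}, u_{2,1} ≠ 0`, there are `a ≠ 0`, `b`,
`w₁, w₂` such that the second derivative `D_{(w₁,0)}D_{(w₂,0)}F_{(a,b)}` is not
identically zero; in fact
`Tr(a·u_{1,1}·w₂)Tr(u_{2,1}·w₁) + Tr(a·u_{1,1}·w₁)Tr(u_{2,1}·w₂) = 1` for suitable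
`a, w₁, w₂` (so `F` is not in the complete Maiorana–McFarland class). -/
theorem stmt13 (m : ℕ) (hm : 2 ≤ m)
    (φ : K m ≃+* K m)
    (u₁₁ u₂₁ u₂₂ : K m) (hu₁₁ : u₁₁ ≠ 0) (hu₂₁ : u₂₁ ≠ 0)
    (h1 : u₂₁ = φ u₂₂) (h2 : trm m (φ.symm u₁₁ * u₂₂) = 0)
    (F : K m × K m → K m × K m)
    (hF : ∀ y z : K m, F (y, z) =
      (y * φ z + trm m (u₂₁ * y + u₂₂ * z) * (u₁₁ * y), z)) :
    ∃ a b w₁ w₂ : K m, a ≠ 0 ∧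
      trm m (a * u₁₁ * w₂) * trm m (u₂₁ * w₁)
        + trm m (a * u₁₁ * w₁) * trm m (u₂₁ * w₂) = 1 ∧
      ∃ v : K m × K m,
        ip m (a, b) (F (v + (w₁, 0) + (w₂, 0))) + ip m (a, b) (F (v + (w₁, 0)))
          + ip m (a, b) (F (v + (w₂, 0))) + ip m (a, b) (F v) ≠ 0 := by
  have hm0 : m ≠ 0 := by omega
  have h2K : (2 : K m) = 0 := CharTwo.two_eq_zero
  -- choose a ≠ 0 with a * u₁₁ ≠ u₂₁
  obtain ⟨a, ha0, had⟩ : ∃ a : K m, a ≠ 0 ∧ a * u₁₁ ≠ u₂₁ := by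
    by_contra h
    push_neg at h
    have hsub : (Finset.univ : Finset (K m)) ⊆ {0, u₂₁ * u₁₁⁻¹} := by
      intro x _
      rcases eq_or_ne x 0 with hx | hx
      · simp [hx]
      · have := h x hx
        have : x = u₂₁ * u₁₁⁻¹ := by
          field_simp
          linear_combination this
        simp [this]
    have hcard := Finset.card_le_card hsub
    rw [Finset.card_univ, card_K m hm0] at hcard
    have : (4:ℕ) ≤ 2 ^ m := by
      calc (4:ℕ) = 2^2 := rfl
      _ ≤ 2 ^ m := Nat.pow_le_pow_right (by norm_num) hm
    have h5 := Finset.card_insert_le (0 : K m) {u₂₁ * u₁₁⁻¹}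
    have h6 : ({u₂₁ * u₁₁⁻¹} : Finset (K m)).card = 1 := Finset.card_singleton _
    omega
  have hau : a * u₁₁ ≠ 0 := mul_ne_zero ha0 hu₁₁
  have hc : a * u₁₁ + u₂₁ ≠ 0 := by
    intro h
    exact had (by linear_combination h - u₂₁ * h2K)
  obtain ⟨x0, hx0⟩ := exists_trm_mul_one m hm0 _ hc
  have hx0' : trm m (a * u₁₁ * x0) + trm m (u₂₁ * x0) = 1 := by
    rw [← trm_add]
    rw [show a * u₁₁ * x0 + u₂₁ * x0 = (a * u₁₁ + u₂₁) * x0 by ring]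
    exact hx0
  -- key computation of ip at points (w,0)
  have hip : ∀ w : K m, ip m (a, (0:K m)) (F (w, 0))
      = trm m (u₂₁ * w) * trm m (a * u₁₁ * w) := by
    intro w
    rw [hF w 0]
    simp only [ip, map_zero, mul_zero, add_zero, zero_mul, trm_zero]
    rcases trm_mem m hm0 (u₂₁ * w) with h | h <;> rw [h]
    · rw [show a * (0 + 0 * (u₁₁ * w)) = 0 by ring, trm_zero, zero_mul]
    · rw [show a * (0 + 1 * (u₁₁ * w)) = a * u₁₁ * w by ring, one_mul]
  -- the total second-derivative value at v = (0,0)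
  have hE : ∀ w₁ w₂ : K m,
      ip m (a, (0:K m)) (F (((0:K m),(0:K m)) + (w₁, 0) + (w₂, 0)))
        + ip m (a, (0:K m)) (F (((0:K m),(0:K m)) + (w₁, 0)))
        + ip m (a, (0:K m)) (F (((0:K m),(0:K m)) + (w₂, 0)))
        + ip m (a, (0:K m)) (F ((0:K m),(0:K m)))
      = (trm m (u₂₁ * w₁) + trm m (u₂₁ * w₂))
          * (trm m (a * u₁₁ * w₁) + trm m (a * u₁₁ * w₂))
        + trm m (u₂₁ * w₁) * trm m (a * u₁₁ * w₁)
        + trm m (u₂₁ * w₂) * trm m (a * u₁₁ * w₂) := by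
    intro w₁ w₂
    have e1 : ((0:K m),(0:K m)) + (w₁, (0:K m)) + (w₂, (0:K m)) = (w₁ + w₂, (0:K m)) := by
      simp [Prod.ext_iff]
    have e2 : ((0:K m),(0:K m)) + (w₁, (0:K m)) = (w₁, (0:K m)) := by simp
    have e3 : ((0:K m),(0:K m)) + (w₂, (0:K m)) = (w₂, (0:K m)) := by simp
    have e4 : (((0:K m),(0:K m)) : K m × K m) = ((0:K m), (0:K m)) := rfl
    rw [e1, e2, e3, hip, hip, hip, hip 0]
    rw [show u₂₁ * (w₁ + w₂) = u₂₁ * w₁ + u₂₁ * w₂ by ring, trm_add,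
      show a * u₁₁ * (w₁ + w₂) = a * u₁₁ * w₁ + a * u₁₁ * w₂ by ring, trm_add,
      mul_zero, trm_zero, zero_mul, add_zero]
  rcases trm_mem m hm0 (a * u₁₁ * x0) with hS0 | hS0
  · -- S0 = 0, so T0 = 1; w₂ := x0, pick w₁ with trm (a u₁₁ w₁) = 1
    have hT0 : trm m (u₂₁ * x0) = 1 := by
      rw [hS0, zero_add] at hx0'; exact hx0'
    obtain ⟨w₁, hw₁⟩ := exists_trm_mul_one m hm0 _ hau
    refine ⟨a, 0, w₁, x0, ha0, ?_, ((0:K m),(0:K m)), ?_⟩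
    · rw [hS0, hw₁, hT0]; ring
    · rw [hE w₁ x0, hS0, hT0, hw₁]
      intro h
      have : (1 : K m) = 0 := by
        linear_combination h - trm m (u₂₁ * w₁) * h2K
      exact one_ne_zero this
  · -- S0 = 1, so T0 = 0; w₂ := x0, pick w₁ with trm (u₂₁ w₁) = 1
    have hT0 : trm m (u₂₁ * x0) = 0 := by
      rw [hS0] at hx0'
      linear_combination hx0'
    obtain ⟨w₁, hw₁⟩ := exists_trm_mul_one m hm0 _ hu₂₁
    refine ⟨a, 0, w₁, x0, ha0, ?_, ((0:K m),(0:K m)), ?_⟩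
    · rw [hS0, hw₁, hT0]; ring
    · rw [hE w₁ x0, hS0, hT0, hw₁]
      intro h
      have : (1 : K m) = 0 := by
        linear_combination h - trm m (a * u₁₁ * w₁) * h2K
      exact one_ne_zero this
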